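/- Fix parameters (c_σ, b_σ), (c_μ, b_μ), (c_ν, b_ν) with c_σ, c_μ, c_ν > 0 and b_σ, b_μ, b_ν ∈ ℝ∖{0}, and let Φ⁺ be the associated one-dimensional phase. Then for every K ≥ 1 there exists C > 0, depending on K and the parameters, such that for every α ∈ ℝ with |α| ∈ [K^{−1}, K] and every ε > 0, the Lebesgue measure of the set {β ∈ ℝ : |β| ∈ [K^{−1}, K], |α−β| ∈ [K^{−1}, K], |Φ⁺(α,β)| ≤ ε} is at most C ε^{1/3}. -/

import Mathlib

open MeasureTheory

noncomputable section

/-- `Λ_τ(x) = sgn(b_τ)·√(c_τ² x² + b_τ²)` on the real line. -/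
def Lam1 (c b x : ℝ) : ℝ := Real.sign b * Real.sqrt (c ^ 2 * x ^ 2 + b ^ 2)

/-- The one-dimensional phase `Φ⁺(α,β) = Λ_σ(α) − Λ_μ(α−β) − Λ_ν(β)`. -/
def PhiP (cσ bσ cμ bμ cν bν α β : ℝ) : ℝ :=
  Lam1 cσ bσ α - Lam1 cμ bμ (α - β) - Lam1 cν bν β

/-!
Writing `L = Λ(x)`, the derivatives of `Λ` are `c²x/L`, `c²b²/L³` and `-3c⁴b²x/L⁵`. If the first
three `β`-derivatives of `Φ⁺` vanish at a point with `α ≠ β`, these formulas force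
`Λ_μ(α - β) + Λ_ν(β) = 0`, so that `Φ⁺ = Λ_σ(α) ≠ 0` there. Hence on the compact region
`{|β|, |α - β| ∈ [K⁻¹, K]}` every point has a ball on which one `∂_β^j Φ⁺`, `j ≤ 3`, stays away
from zero, and finitely many such balls cover the region. On each of them the van der Corput
sublevel estimate `|{|f| ≤ ε}| ≤ (2^(k+1) - 2) (ε/m)^(1/k)` for `f^(k) ≥ m` (by induction on `k`,
splitting according to the size of the monotone `f^(k-1)`) bounds the slice by `O(ε^(1/3))`.
-/

open Set Topology

theorem Set.OrdConnected.mul_sub_le_image_sub_of_le_deriv {T : Set ℝ} (hT : T.OrdConnected)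
    {f f' : ℝ → ℝ} (hf : ∀ x ∈ T, HasDerivAt f (f' x) x) {m : ℝ} (hm : ∀ x ∈ T, m ≤ f' x)
    {x y : ℝ} (hx : x ∈ T) (hy : y ∈ T) (hxy : x ≤ y) : m * (y - x) ≤ f y - f x :=
  hT.convex.mul_sub_le_image_sub_of_le_deriv
    (fun z hz => (hf z hz).continuousAt.continuousWithinAt)
    (fun z hz => (hf z (interior_subset hz)).differentiableAt.differentiableWithinAt)
    (fun z hz => (hf z (interior_subset hz)).deriv ▸ hm z (interior_subset hz)) x hx y hy hxy

theorem volume_sublevel_le_of_deriv_ge {T : Set ℝ} (hT : T.OrdConnected) {f f' : ℝ → ℝ}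
    (hf : ∀ x ∈ T, HasDerivAt f (f' x) x) {m : ℝ} (hm : 0 < m) (hlow : ∀ x ∈ T, m ≤ f' x)
    (ε : ℝ) : volume {x ∈ T | |f x| ≤ ε} ≤ ENNReal.ofReal (2 * ε / m) := by
  refine (Real.volume_le_diam _).trans (Metric.ediam_le fun x hx y hy => ?_)
  rw [edist_dist, Real.dist_eq]
  refine ENNReal.ofReal_le_ofReal ?_
  rw [le_div_iff₀ hm]
  wlog hxy : x ≤ y generalizing x y
  · rw [abs_sub_comm]; exact this y hy x hx (le_of_not_ge hxy)
  have := hT.mul_sub_le_image_sub_of_le_deriv hf hlow hx.1 hy.1 hxy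
  rw [abs_of_nonpos (by linarith)]
  linarith [abs_le.1 hx.2, abs_le.1 hy.2]

theorem Set.OrdConnected.forall_le_or_forall_le_neg {T : Set ℝ} (hT : T.OrdConnected)
    {f : ℝ → ℝ} (hf : ContinuousOn f T) {m : ℝ} (hm : 0 < m) (h : ∀ x ∈ T, m ≤ |f x|) :
    (∀ x ∈ T, m ≤ f x) ∨ (∀ x ∈ T, f x ≤ -m) := by
  by_contra! ⟨⟨x, hx, hfx⟩, ⟨y, hy, hfy⟩⟩
  have hfx' : f x ≤ -m := by cases abs_cases (f x) <;> linarith [h x hx]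
  have hfy' : m ≤ f y := by cases abs_cases (f y) <;> linarith [h y hy]
  obtain ⟨z, hz, hfz⟩ :=
    hT.isPreconnected.intermediate_value hx hy hf
      (show (0 : ℝ) ∈ Icc (f x) (f y) from ⟨by linarith, by linarith⟩)
  have := h z hz
  rw [hfz, abs_zero] at this
  linarith

theorem volume_sublevel_le_of_nth_deriv_ge (k : ℕ) {F : ℕ → ℝ → ℝ} {T : Set ℝ}
    (hT : T.OrdConnected) (hF : ∀ j ≤ k, ∀ x ∈ T, HasDerivAt (F j) (F (j + 1) x) x)
    {m ε : ℝ} (hm : 0 < m) (hε : 0 < ε) (hlow : ∀ x ∈ T, m ≤ F (k + 1) x) :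
    volume {x ∈ T | |F 0 x| ≤ ε} ≤
      ENNReal.ofReal ((2 ^ (k + 2) - 2) * (ε / m) ^ ((k + 1 : ℕ) : ℝ)⁻¹) := by
  induction k generalizing F T m with
  | zero =>
    convert volume_sublevel_le_of_deriv_ge hT (hF 0 le_rfl) hm hlow ε using 2
    norm_num
    ring
  | succ k ih =>
    -- Split according to whether `|F (k + 1)| ≤ m t`; `t = (ε/m)^(1/(k+2))` balances the bounds
    -- `2 t` on that set and `(ε/(m t))^(1/(k+1))` on the two monotone pieces outside it.
    set t := (ε / m) ^ ((k + 2 : ℕ) : ℝ)⁻¹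
    have ht : 0 < t := by positivity
    have hρ : 0 < m * t := by positivity
    have hερ : (ε / (m * t)) ^ ((k + 1 : ℕ) : ℝ)⁻¹ = t := by
      have htpow : t ^ (k + 2) = ε / m := Real.rpow_inv_natCast_pow (by positivity) (by omega)
      have : ε / (m * t) = t ^ (k + 1) := by
        rw [div_eq_iff hρ.ne', (div_eq_iff hm.ne').mp htpow.symm]
        ring
      rw [this, Real.pow_rpow_inv_natCast ht.le (by omega)]
    have hmono : ∀ x ∈ T, ∀ y ∈ T, x ≤ y → F (k + 1) x ≤ F (k + 1) y := fun x hx y hy hxy => by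
      nlinarith [hT.mul_sub_le_image_sub_of_le_deriv (hF (k + 1) le_rfl) hlow hx hy hxy]
    have hF' : ∀ j ≤ k, ∀ x ∈ T, HasDerivAt (F j) (F (j + 1) x) x :=
      fun j hj => hF j (by omega)
    set Tpos := {x ∈ T | m * t ≤ F (k + 1) x}
    set Tneg := {x ∈ T | F (k + 1) x ≤ -(m * t)}
    have hcover : {x ∈ T | |F 0 x| ≤ ε} ⊆ {x ∈ T | |F (k + 1) x| ≤ m * t} ∪
        {x ∈ Tpos | |F 0 x| ≤ ε} ∪ {x ∈ Tneg | |F 0 x| ≤ ε} := by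
      rintro x ⟨hxT, hx⟩
      rcases le_or_gt |F (k + 1) x| (m * t) with h | h
      · exact Or.inl (Or.inl ⟨hxT, h⟩)
      rcases le_or_gt (m * t) (F (k + 1) x) with h' | h'
      · exact Or.inl (Or.inr ⟨⟨hxT, h'⟩, hx⟩)
      · exact Or.inr ⟨⟨hxT, by cases abs_cases (F (k + 1) x) <;> linarith⟩, hx⟩
    have hsmall : volume {x ∈ T | |F (k + 1) x| ≤ m * t} ≤ ENNReal.ofReal (2 * t) := by
      convert volume_sublevel_le_of_deriv_ge hT (hF (k + 1) le_rfl) hm hlow (m * t) using 2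
      field_simp
    have hpos : volume {x ∈ Tpos | |F 0 x| ≤ ε} ≤ ENNReal.ofReal ((2 ^ (k + 2) - 2) * t) := by
      rw [← hερ]
      refine ih (T := Tpos) ⟨fun x hx y hy z hz => ⟨hT.out hx.1 hy.1 hz, ?_⟩⟩
        (fun j hj x hx => hF' j hj x hx.1) hρ (fun x hx => hx.2)
      exact hx.2.trans (hmono x hx.1 z (hT.out hx.1 hy.1 hz) hz.1)
    have hneg : volume {x ∈ Tneg | |F 0 x| ≤ ε} ≤ ENNReal.ofReal ((2 ^ (k + 2) - 2) * t) := by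
      rw [← hερ]
      have := ih (F := fun j x => -F j x) (T := Tneg)
        ⟨fun x hx y hy z hz => ⟨hT.out hx.1 hy.1 hz, ?_⟩⟩
        (fun j hj x hx => (hF' j hj x hx.1).neg) hρ (fun x hx => le_neg.2 hx.2)
      · simpa only [abs_neg] using this
      · exact (hmono z (hT.out hx.1 hy.1 hz) y hy.1 hz.2).trans hy.2
    have hconst : (0 : ℝ) ≤ 2 ^ (k + 2) - 2 := by
      have : (2 : ℝ) ^ 1 ≤ 2 ^ (k + 2) := pow_le_pow_right₀ (by norm_num) (by omega)
      linarith
    calc volume {x ∈ T | |F 0 x| ≤ ε}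
        ≤ ENNReal.ofReal (2 * t) + ENNReal.ofReal ((2 ^ (k + 2) - 2) * t)
          + ENNReal.ofReal ((2 ^ (k + 2) - 2) * t) :=
          (measure_mono hcover).trans <| (measure_union_le _ _).trans <|
            add_le_add ((measure_union_le _ _).trans (add_le_add hsmall hpos)) hneg
      _ = ENNReal.ofReal ((2 ^ (k + 1 + 2) - 2) * t) := by
          rw [← ENNReal.ofReal_add (by positivity) (by positivity),
            ← ENNReal.ofReal_add (by positivity) (by positivity)]
          ring_nf

theorem volume_sublevel_le_of_le_abs_nth_deriv {n k : ℕ} (hkn : k ≤ n) {F : ℕ → ℝ → ℝ}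
    {T : Set ℝ} {a b : ℝ} (hT : T.OrdConnected) (hTab : T ⊆ Icc a b)
    (hF : ∀ j < k, ∀ x ∈ T, HasDerivAt (F j) (F (j + 1) x) x) (hFk : ContinuousOn (F k) T)
    {m ε : ℝ} (hm : 0 < m) (hε : 0 < ε) (hlow : ∀ x ∈ T, m ≤ |F k x|) :
    volume {x ∈ T | |F 0 x| ≤ ε} ≤
      ENNReal.ofReal ((b - a + 2 ^ (n + 1)) * (ε / m) ^ (n : ℝ)⁻¹) := by
  rcases T.eq_empty_or_nonempty with rfl | ⟨x₀, hx₀⟩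
  · simp
  have hab : a ≤ b := (hTab hx₀).1.trans (hTab hx₀).2
  set t := (ε / m) ^ (n : ℝ)⁻¹
  have ht : 0 ≤ t := by positivity
  have h2n : (0 : ℝ) ≤ 2 ^ (n + 1) := by positivity
  rcases le_or_gt 1 (ε / m) with hbig | hsmall
  · have : 1 ≤ t := Real.one_le_rpow hbig (by positivity)
    calc volume {x ∈ T | |F 0 x| ≤ ε} ≤ volume (Icc a b) := measure_mono fun x hx => hTab hx.1
      _ = ENNReal.ofReal (b - a) := Real.volume_Icc
      _ ≤ _ := ENNReal.ofReal_le_ofReal <| by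
          nlinarith [mul_le_mul_of_nonneg_left this (sub_nonneg.2 hab), mul_nonneg h2n ht]
  cases k with
  | zero =>
    have hempty : {x ∈ T | |F 0 x| ≤ ε} = ∅ := by
      refine Set.eq_empty_of_forall_notMem fun x hx => ?_
      have := hlow x hx.1
      rw [div_lt_one hm] at hsmall
      linarith [hx.2]
    simp [hempty]
  | succ k =>
    have hF' : ∀ j ≤ k, ∀ x ∈ T, HasDerivAt (F j) (F (j + 1) x) x := fun j hj => hF j (by omega)
    have hbound : volume {x ∈ T | |F 0 x| ≤ ε} ≤
        ENNReal.ofReal ((2 ^ (k + 2) - 2) * (ε / m) ^ ((k + 1 : ℕ) : ℝ)⁻¹) := by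
      rcases hT.forall_le_or_forall_le_neg hFk hm hlow with h | h
      · exact volume_sublevel_le_of_nth_deriv_ge k hT hF' hm hε h
      · simpa only [abs_neg] using volume_sublevel_le_of_nth_deriv_ge k (F := fun j x => -F j x)
          hT (fun j hj x hx => (hF' j hj x hx).neg) hm hε fun x hx => le_neg.2 (h x hx)
    refine hbound.trans (ENNReal.ofReal_le_ofReal ?_)
    have hst : (ε / m) ^ ((k + 1 : ℕ) : ℝ)⁻¹ ≤ t :=
      Real.rpow_le_rpow_of_exponent_ge (by positivity) hsmall.le
        (inv_anti₀ (by positivity) (by exact_mod_cast hkn))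
    have hpow : (2 : ℝ) ^ (k + 2) ≤ 2 ^ (n + 1) := pow_le_pow_right₀ (by norm_num) (by omega)
    have : 0 ≤ (ε / m) ^ ((k + 1 : ℕ) : ℝ)⁻¹ := by positivity
    nlinarith [mul_le_mul_of_nonneg_left hst h2n, mul_nonneg (sub_nonneg.2 hab) ht,
      mul_le_mul_of_nonneg_right hpow this]

theorem IsCompact.exists_volume_slice_le {X ι : Type*} [TopologicalSpace X]
    {D : Set (X × ℝ)} (hD : IsCompact D) {S : ι → Set (X × ℝ)} (hSD : ∀ i, S i ⊆ D)
    {g : ι → ℝ} (hg : ∀ i, 0 ≤ g i)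
    (hloc : ∀ p ∈ D, ∃ U ∈ 𝓝 p, ∃ C ≥ 0, ∀ x i,
      volume {y | (x, y) ∈ U ∩ S i} ≤ ENNReal.ofReal (C * g i)) :
    ∃ C > 0, ∀ x i, volume {y | (x, y) ∈ S i} ≤ ENNReal.ofReal (C * g i) := by
  choose U hU C hC hbound using hloc
  obtain ⟨t, hcover⟩ := hD.elim_nhds_subcover' U hU
  refine ⟨∑ p ∈ t, C p p.2 + 1,
    add_pos_of_nonneg_of_pos (Finset.sum_nonneg fun p _ => hC p p.2) one_pos, fun x i => ?_⟩
  calc volume {y | (x, y) ∈ S i}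
      ≤ volume (⋃ p ∈ t, {y | (x, y) ∈ U p p.2 ∩ S i}) := measure_mono fun y hy => by
        obtain ⟨p, hp, hyp⟩ := mem_iUnion₂.1 (hcover (hSD i hy))
        exact mem_iUnion₂.2 ⟨p, hp, hyp, hy⟩
    _ ≤ ∑ p ∈ t, ENNReal.ofReal (C p p.2 * g i) :=
        (measure_biUnion_finset_le _ _).trans (Finset.sum_le_sum fun p _ => hbound p p.2 x i)
    _ = ENNReal.ofReal ((∑ p ∈ t, C p p.2) * g i) := by
        rw [Finset.sum_mul,
          ENNReal.ofReal_sum_of_nonneg fun (p : D) _ => mul_nonneg (hC p p.2) (hg i)]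
    _ ≤ ENNReal.ofReal ((∑ p ∈ t, C p p.2 + 1) * g i) :=
        ENNReal.ofReal_le_ofReal (mul_le_mul_of_nonneg_right (by linarith) (hg i))

section Slice

variable {X : Type*} [PseudoMetricSpace X] (p : X × ℝ) (r : ℝ) (x : X)

lemma ordConnected_setOf_mk_mem_ball : {y | (x, y) ∈ Metric.ball p r}.OrdConnected := by
  refine ⟨fun y hy y' hy' z hz => ?_⟩
  simp only [mem_ofPred_eq, Metric.mem_ball, Prod.dist_eq, max_lt_iff, Real.dist_eq,
    abs_sub_lt_iff] at hy hy' ⊢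
  exact ⟨hy.1, by linarith [hz.2, hy'.2.1], by linarith [hz.1, hy.2.2]⟩

lemma setOf_mk_mem_ball_subset_Icc : {y | (x, y) ∈ Metric.ball p r} ⊆ Icc (p.2 - r) (p.2 + r) := by
  intro y hy
  simp only [mem_ofPred_eq, Metric.mem_ball, Prod.dist_eq, max_lt_iff, Real.dist_eq,
    abs_sub_lt_iff] at hy
  exact ⟨by linarith [hy.2.2], by linarith [hy.2.1]⟩

end Slice

lemma Real.sign_mul_sign_of_ne_zero {b : ℝ} (hb : b ≠ 0) : Real.sign b * Real.sign b = 1 := by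
  rcases Real.sign_apply_eq_of_ne_zero b hb with h | h <;> simp [h]

lemma isCompact_setOf_abs_snd_mem_Icc_and_abs_sub_mem_Icc (a b : ℝ) :
    IsCompact {p : ℝ × ℝ | |p.2| ∈ Icc a b ∧ |p.1 - p.2| ∈ Icc a b} := by
  refine (isCompact_Icc (a := -(2 * b)) (b := 2 * b)).prod (isCompact_Icc (a := -b) (b := b))
    |>.of_isClosed_subset
    ((isClosed_Icc.preimage (by fun_prop)).inter (isClosed_Icc.preimage (by fun_prop)))
    fun p hp => ?_
  obtain ⟨h2, h2'⟩ := abs_le.1 hp.1.2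
  obtain ⟨h12, h12'⟩ := abs_le.1 hp.2.2
  exact ⟨⟨by linarith, by linarith⟩, h2, h2'⟩

section Lam

variable (c : ℝ) {b : ℝ}

lemma lam1_sq (hb : b ≠ 0) (x : ℝ) : Lam1 c b x ^ 2 = c ^ 2 * x ^ 2 + b ^ 2 := by
  rw [Lam1, mul_pow, Real.sq_sqrt (by positivity), sq, Real.sign_mul_sign_of_ne_zero hb, one_mul]

lemma lam1_ne_zero (hb : b ≠ 0) (x : ℝ) : Lam1 c b x ≠ 0 :=
  mul_ne_zero (Real.sign_eq_zero_iff.not.2 hb) (Real.sqrt_pos.2 (by positivity)).ne'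

lemma continuous_lam1 (b : ℝ) : Continuous (Lam1 c b) := by
  unfold Lam1; fun_prop

lemma hasDerivAt_lam1 (hb : b ≠ 0) (x : ℝ) :
    HasDerivAt (Lam1 c b) (c ^ 2 * x / Lam1 c b x) x := by
  have hQ : c ^ 2 * x ^ 2 + b ^ 2 ≠ 0 := by positivity
  have h : HasDerivAt (Lam1 c b) _ x :=
    ((((hasDerivAt_pow 2 x).const_mul (c ^ 2)).add_const (b ^ 2)).sqrt hQ).const_mul (Real.sign b)
  refine h.congr_deriv ?_
  have hL := lam1_ne_zero c hb x
  field_simp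
  rw [Lam1]
  linear_combination (2 * c ^ 2 * x * Real.sqrt (c ^ 2 * x ^ 2 + b ^ 2)) *
    Real.sign_mul_sign_of_ne_zero hb

-- `Λ^(j)` for `j ≤ 3`, expressed through `Λ` itself via `Λ² = c²x² + b²`; orders `≥ 4` are junk.
def lamDeriv (c b : ℝ) : ℕ → ℝ → ℝ
  | 0, x => Lam1 c b x
  | 1, x => c ^ 2 * x / Lam1 c b x
  | 2, x => c ^ 2 * b ^ 2 / Lam1 c b x ^ 3
  | 3, x => -3 * c ^ 4 * b ^ 2 * x / Lam1 c b x ^ 5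
  | _, _ => 0

lemma hasDerivAt_lamDeriv (hb : b ≠ 0) {j : ℕ} (hj : j ≤ 2) (x : ℝ) :
    HasDerivAt (lamDeriv c b j) (lamDeriv c b (j + 1) x) x := by
  have hL := lam1_ne_zero c hb x
  have hsq := lam1_sq c hb x
  have hd := hasDerivAt_lam1 c hb x
  interval_cases j
  · exact hd
  · refine (((hasDerivAt_id x).const_mul (c ^ 2)).div hd hL).congr_deriv ?_
    simp only [lamDeriv, id]
    field_simp
    linear_combination c ^ 2 * hsq
  · refine ((hasDerivAt_const x (c ^ 2 * b ^ 2)).div (hd.pow 3) (pow_ne_zero 3 hL)).congr_deriv ?_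
    simp only [lamDeriv, Pi.pow_apply]
    field_simp
    ring

lemma continuous_lamDeriv (hb : b ≠ 0) (j : ℕ) : Continuous (lamDeriv c b j) := by
  match j with
  | 0 | 1 | 2 =>
    exact continuous_iff_continuousAt.2 fun x =>
      (hasDerivAt_lamDeriv c hb (by norm_num) x).continuousAt
  | 3 =>
    exact Continuous.div (by fun_prop) ((continuous_lam1 c b).pow 5) fun x =>
      pow_ne_zero 5 (lam1_ne_zero c hb x)
  | _ + 4 => exact continuous_const

end Lam

section Phi

variable {cσ bσ cμ bμ cν bν : ℝ}

-- `phiDeriv … α j β = ∂_β^j Φ⁺(α, β)` for `j ≤ 3`.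
def phiDeriv (cσ bσ cμ bμ cν bν α : ℝ) : ℕ → ℝ → ℝ
  | 0, β => PhiP cσ bσ cμ bμ cν bν α β
  | j + 1, β => (-1) ^ j * lamDeriv cμ bμ (j + 1) (α - β) - lamDeriv cν bν (j + 1) β

lemma hasDerivAt_phiDeriv (hbμ : bμ ≠ 0) (hbν : bν ≠ 0) {j : ℕ} (hj : j ≤ 2) (α β : ℝ) :
    HasDerivAt (phiDeriv cσ bσ cμ bμ cν bν α j) (phiDeriv cσ bσ cμ bμ cν bν α (j + 1) β) β := by
  have hμ : ∀ i ≤ 2, HasDerivAt (fun y => lamDeriv cμ bμ i (α - y))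
      (-lamDeriv cμ bμ (i + 1) (α - β)) β := fun i hi =>
    (hasDerivAt_lamDeriv cμ hbμ hi (α - β)).comp_const_sub α β
  have hν := hasDerivAt_lamDeriv cν hbν hj β
  cases j with
  | zero =>
    refine (((hμ 0 (by norm_num)).const_sub _).sub hν).congr_deriv ?_
    simp [phiDeriv]
  | succ i =>
    refine (((hμ (i + 1) hj).const_mul ((-1) ^ i)).sub hν).congr_deriv ?_
    simp only [phiDeriv]
    ring

lemma continuous_phiDeriv (hbμ : bμ ≠ 0) (hbν : bν ≠ 0) (j : ℕ) :
    Continuous fun p : ℝ × ℝ => phiDeriv cσ bσ cμ bμ cν bν p.1 j p.2 := by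
  cases j with
  | zero =>
    exact (((continuous_lam1 cσ bσ).comp continuous_fst).sub
      ((continuous_lam1 cμ bμ).comp (continuous_fst.sub continuous_snd))).sub
      ((continuous_lam1 cν bν).comp continuous_snd)
  | succ i =>
    exact (continuous_const.mul ((continuous_lamDeriv cμ hbμ (i + 1)).comp
      (continuous_fst.sub continuous_snd))).sub
      ((continuous_lamDeriv cν hbν (i + 1)).comp continuous_snd)

lemma exists_phiDeriv_ne_zero (hcμ : cμ ≠ 0) (hbσ : bσ ≠ 0) (hbμ : bμ ≠ 0) (hbν : bν ≠ 0)
    {α β : ℝ} (hαβ : α ≠ β) : ∃ j ≤ 3, phiDeriv cσ bσ cμ bμ cν bν α j β ≠ 0 := by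
  by_contra! H
  have h0 := H 0 (by norm_num)
  have h1 := H 1 (by norm_num)
  have h2 := H 2 (by norm_num)
  have h3 := H 3 (by norm_num)
  simp only [phiDeriv, lamDeriv, PhiP] at h0 h1 h2 h3
  have hu : α - β ≠ 0 := sub_ne_zero.2 hαβ
  have hLμ := lam1_ne_zero cμ hbμ (α - β)
  have hLν := lam1_ne_zero cν hbν β
  set Lμ := Lam1 cμ bμ (α - β)
  set Lν := Lam1 cν bν β
  field_simp at h1 h2 h3
  have key : cμ ^ 4 * bμ ^ 2 * (α - β) * Lν ^ 4 * (Lμ + Lν) = 0 := by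
    linear_combination (-1 / 3 : ℝ) * h3 - cν ^ 2 * bν ^ 2 * Lμ ^ 4 * h1
      - cμ ^ 2 * (α - β) * Lν * Lμ * h2
  have hsum : Lμ + Lν = 0 := by simpa [hcμ, hbμ, hu, hLν] using key
  exact lam1_ne_zero cσ hbσ α (by linear_combination h0 + hsum)

lemma exists_nhds_volume_sublevel_phiP_le (hcμ : cμ ≠ 0) (hbσ : bσ ≠ 0) (hbμ : bμ ≠ 0)
    (hbν : bν ≠ 0) {p : ℝ × ℝ} (hp : p.1 ≠ p.2) :
    ∃ U ∈ 𝓝 p, ∃ C ≥ 0, ∀ α ε, 0 < ε →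
      volume {β | (α, β) ∈ U ∧ |PhiP cσ bσ cμ bμ cν bν α β| ≤ ε} ≤
        ENNReal.ofReal (C * ε ^ ((1 : ℝ) / 3)) := by
  obtain ⟨k, hk, hne⟩ := exists_phiDeriv_ne_zero (cσ := cσ) (cν := cν) hcμ hbσ hbμ hbν hp
  set m := |phiDeriv cσ bσ cμ bμ cν bν p.1 k p.2| / 2
  have hm : 0 < m := by positivity
  have hcont := continuous_phiDeriv (cσ := cσ) (bσ := bσ) (cμ := cμ) (cν := cν) hbμ hbν k
  obtain ⟨r, hr, hball⟩ := Metric.mem_nhds_iff.1 <| hcont.abs.continuousAt.preimage_mem_nhds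
    (Ioi_mem_nhds (half_lt_self (abs_pos.2 hne)))
  refine ⟨Metric.ball p r, Metric.ball_mem_nhds p hr, (2 * r + 2 ^ 4) / m ^ ((1 : ℝ) / 3),
    by positivity, fun α ε hε => ?_⟩
  have := volume_sublevel_le_of_le_abs_nth_deriv (n := 3) (F := phiDeriv cσ bσ cμ bμ cν bν α) hk
    (ordConnected_setOf_mk_mem_ball p r α) (setOf_mk_mem_ball_subset_Icc p r α)
    (fun j hj β _ => hasDerivAt_phiDeriv hbμ hbν (by omega) α β)
    (hcont.comp (Continuous.prodMk_right α)).continuousOn hm hε fun β hβ => (hball hβ).le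
  refine this.trans_eq (congrArg ENNReal.ofReal ?_)
  rw [Real.div_rpow hε.le hm.le]
  push_cast
  ring_nf

end Phi

theorem statement7_general (cσ bσ cμ bμ cν bν : ℝ)
    (hcμ : 0 < cμ)
    (hbσ : bσ ≠ 0) (hbμ : bμ ≠ 0) (hbν : bν ≠ 0) :
    ∀ K : ℝ, 1 ≤ K → ∃ C : ℝ, 0 < C ∧
      ∀ α : ℝ, |α| ∈ Set.Icc K⁻¹ K → ∀ ε : ℝ, 0 < ε →
        volume {β : ℝ | |β| ∈ Set.Icc K⁻¹ K ∧ |α - β| ∈ Set.Icc K⁻¹ K ∧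
            |PhiP cσ bσ cμ bμ cν bν α β| ≤ ε} ≤
          ENNReal.ofReal (C * ε ^ ((1 : ℝ) / 3)) := by
  intro K hK
  have hdiag : ∀ p ∈ {p : ℝ × ℝ | |p.2| ∈ Icc K⁻¹ K ∧ |p.1 - p.2| ∈ Icc K⁻¹ K}, p.1 ≠ p.2 :=
    fun p hp h => by
      have := hp.2.1
      rw [h, sub_self, abs_zero] at this
      linarith [inv_pos.2 (zero_lt_one.trans_le hK)]
  obtain ⟨C, hC, hbound⟩ :=
    (isCompact_setOf_abs_snd_mem_Icc_and_abs_sub_mem_Icc K⁻¹ K).exists_volume_slice_le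
      (S := fun ε : Ioi (0 : ℝ) => {p | |p.2| ∈ Icc K⁻¹ K ∧ |p.1 - p.2| ∈ Icc K⁻¹ K ∧
        |PhiP cσ bσ cμ bμ cν bν p.1 p.2| ≤ ε})
      (fun _ _ hp => ⟨hp.1, hp.2.1⟩) (g := fun ε => (ε : ℝ) ^ ((1 : ℝ) / 3))
      (fun ε => Real.rpow_nonneg ε.2.le _) fun p hp => by
        obtain ⟨U, hU, C, hC, hbound⟩ :=
          exists_nhds_volume_sublevel_phiP_le hcμ.ne' hbσ hbμ hbν (hdiag p hp)
        exact ⟨U, hU, C, hC, fun α ε =>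
          (hbound α ε ε.2).trans' (measure_mono fun β hβ => ⟨hβ.1, hβ.2.2.2⟩)⟩
  exact ⟨C, hC, fun α _ ε hε => hbound α ⟨ε, hε⟩⟩

/-- Sublevel-set measure bound: on a compact frequency annulus, the set of `β`
with `|Φ⁺(α,β)| ≤ ε` has measure `≲ ε^{1/3}`. -/
theorem statement7 (cσ bσ cμ bμ cν bν : ℝ)
    (hcσ : 0 < cσ) (hcμ : 0 < cμ) (hcν : 0 < cν)
    (hbσ : bσ ≠ 0) (hbμ : bμ ≠ 0) (hbν : bν ≠ 0) :
    ∀ K : ℝ, 1 ≤ K → ∃ C : ℝ, 0 < C ∧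
      ∀ α : ℝ, |α| ∈ Set.Icc K⁻¹ K → ∀ ε : ℝ, 0 < ε →
        volume {β : ℝ | |β| ∈ Set.Icc K⁻¹ K ∧ |α - β| ∈ Set.Icc K⁻¹ K ∧
            |PhiP cσ bσ cμ bμ cν bν α β| ≤ ε} ≤
          ENNReal.ofReal (C * ε ^ ((1 : ℝ) / 3)) :=
  statement7_general cσ bσ cμ bμ cν bν hcμ hbσ hbμ hbν
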